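/- For a even, the midpoint ruin probability under geometric resetting q_{a/2}(γ), defined by the spectral formula q_z(γ) = (Σ_ν A_ν(z) f_ν(γ)) / (Σ_ν (A_ν(z)+B_ν(z)) f_ν(γ)), equals (q/p)^{a/2} / (1 + (q/p)^{a/2}) for every γ ∈ (0,1), provided the denominator is nonzero; in particular it is independent of γ. -/
import Mathlib


theorem midpoint_invariance
    (a : ℕ) (ha : 2 ≤ a) (hae : Even a)
    (p : ℝ) (hp : p ∈ Set.Ioo (0:ℝ) 1) (q : ℝ) (hq : q = 1 - p)
    (γ : ℝ) (hγ : γ ∈ Set.Ioo (0:ℝ) 1)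
    (lam : ℕ → ℝ)
    (hlam : ∀ ν, lam ν = 2 * Real.sqrt (p * q) * Real.cos (Real.pi * ν / a))
    (f : ℕ → ℝ)
    (hf : ∀ ν, f ν = lam ν * (1 - γ) / (1 - lam ν * (1 - γ)))
    (A B : ℕ → ℕ → ℝ)
    (hA : ∀ ν z, A ν z = (2 / a) * (q / p) ^ ((z : ℝ) / 2) *
      Real.sin (Real.pi * ν * z / a) * Real.sin (Real.pi * ν / a))
    (hB : ∀ ν z, B ν z = (2 / a) * (p / q) ^ (((a : ℝ) - z) / 2) *
      Real.sin (Real.pi * ν * ((a : ℝ) - z) / a) * Real.sin (Real.pi * ν / a))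
    (hden : ∑ ν ∈ Finset.Icc 1 (a - 1), (A ν (a / 2) + B ν (a / 2)) * f ν ≠ 0) :
    (∑ ν ∈ Finset.Icc 1 (a - 1), A ν (a / 2) * f ν) /
      (∑ ν ∈ Finset.Icc 1 (a - 1), (A ν (a / 2) + B ν (a / 2)) * f ν)
      = (q / p) ^ ((a : ℝ) / 2) / (1 + (q / p) ^ ((a : ℝ) / 2)) := by
  obtain ⟨hp0, hp1⟩ := hp
  have hq0 : 0 < q := by rw [hq]; linarith
  have hqp : 0 < q / p := div_pos hq0 hp0
  set K : ℝ := (q / p) ^ ((a : ℝ) / 2) with hK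
  have hK0 : 0 < K := Real.rpow_pos_of_pos hqp _
  have hhalf : ((a / 2 : ℕ) : ℝ) = (a : ℝ) / 2 := by
    obtain ⟨k, hk⟩ := hae
    subst hk
    push_cast [Nat.add_mul_div_left, Nat.mul_div_cancel_left]
    rw [show k + k = 2 * k by ring, Nat.mul_div_cancel_left k (by norm_num)]
    push_cast; ring
  have hsub : (a : ℝ) - ((a / 2 : ℕ) : ℝ) = (a : ℝ) / 2 := by rw [hhalf]; ring
  have hAB : ∀ ν, A ν (a / 2) = K * B ν (a / 2) := by
    intro ν
    rw [hA, hB, hhalf, show (a:ℝ) - (a:ℝ)/2 = (a:ℝ)/2 by ring]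
    have hpq : (p / q : ℝ) = (q / p)⁻¹ := by
      rw [inv_div]
    have : (p / q : ℝ) ^ (((a : ℝ) / 2) / 2) = (q / p) ^ (-(((a : ℝ) / 2) / 2)) := by
      rw [hpq, Real.inv_rpow hqp.le, ← Real.rpow_neg hqp.le]
    rw [this]
    have hK2 : K * (q / p) ^ (-(((a : ℝ) / 2) / 2)) = (q / p) ^ (((a : ℝ) / 2) / 2) := by
      rw [hK, ← Real.rpow_add hqp]
      ring_nf
    rw [← hK2]; ring
  have hnum : (∑ ν ∈ Finset.Icc 1 (a - 1), A ν (a / 2) * f ν)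
      = K * ∑ ν ∈ Finset.Icc 1 (a - 1), B ν (a / 2) * f ν := by
    rw [Finset.mul_sum]
    exact Finset.sum_congr rfl fun ν _ => by rw [hAB]; ring
  have hden2 : (∑ ν ∈ Finset.Icc 1 (a - 1), (A ν (a / 2) + B ν (a / 2)) * f ν)
      = (K + 1) * ∑ ν ∈ Finset.Icc 1 (a - 1), B ν (a / 2) * f ν := by
    rw [Finset.mul_sum]
    exact Finset.sum_congr rfl fun ν _ => by rw [hAB]; ring
  rw [hnum, hden2]
  have hBne : (∑ ν ∈ Finset.Icc 1 (a - 1), B ν (a / 2) * f ν) ≠ 0 := by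
    intro h
    apply hden
    rw [hden2, h, mul_zero]
  rw [mul_div_mul_right _ _ hBne]
  rw [add_comm K 1]
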